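/- Let K be a simplicial complex on a finite vertex set V, let t ≥ 0 be an integer, and let σ ∈ K. Then for all k, the relative homology groups satisfy H_k( T_t(K), T_t(cost(K,σ)) ) ≅ H_{k−|σ|}( T_t(lk(K,σ)), T_t(lk(K,σ)) ∩ ( ⋃_{σ'⊆σ, 1≤|σ'|≤t} T_{t−|σ'|}(lk(K[V∖σ'], σ∖σ')) ) ), where the tolerance complexes of lk(K,σ) and of lk(K[V∖σ'], σ∖σ') are taken on the vertex set V∖σ, the tolerance complex of cost(K,σ) is taken on V, and the tolerance complex of K[U] is taken on U. -/

import Mathlib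

open Finset

variable {V : Type*} [DecidableEq V] [LinearOrder V] [Fintype V]

/-- A (possibly void) simplicial complex: a family of finite sets closed under subsets. -/
def IsComplex {V : Type*} [DecidableEq V] (K : Finset (Finset V)) : Prop :=
  ∀ σ ∈ K, ∀ τ ⊆ σ, τ ∈ K

/-- The faces of `X` which are not faces of `Y` and have cardinality `j + 1`
(i.e. dimension `j`). -/
abbrev RelFace (X Y : Finset (Finset V)) (j : ℤ) : Type _ :=
  {σ : Finset V // σ ∈ X ∧ σ ∉ Y ∧ (σ.card : ℤ) = j + 1}

/-- The simplicial boundary operator from `i`-dimensional chains of the pair `(X, Y)` to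
`j`-dimensional chains; it is the usual boundary operator when `j = i - 1`
(and the zero map otherwise). Signs are determined by the linear order on the vertices. -/
noncomputable def relBoundary (X Y : Finset (Finset V)) (i j : ℤ) :
    (RelFace X Y i → ℝ) →ₗ[ℝ] (RelFace X Y j → ℝ) :=
  Matrix.mulVecLin fun (τ : RelFace X Y j) (σ : RelFace X Y i) =>
    ∑ v ∈ σ.1, if σ.1.erase v = τ.1 then (-1 : ℝ) ^ (σ.1.filter (· < v)).card else 0

/-- The `j`-th relative simplicial homology group (with ℝ coefficients) of the pair `(X, Y)`:
cycles modulo boundaries, in the chain complex generated by the simplices of `X` not in `Y`. -/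
noncomputable abbrev relHomology (X Y : Finset (Finset V)) (j : ℤ) : Type _ :=
  LinearMap.ker (relBoundary X Y j (j - 1)) ⧸
    Submodule.comap (LinearMap.ker (relBoundary X Y j (j - 1))).subtype
      (LinearMap.range (relBoundary X Y (j + 1) j))

/-- The `j`-th reduced simplicial homology group of `K`, with ℝ coefficients.
(The chain complex is augmented: the empty set is a face of dimension `-1`.) -/
noncomputable abbrev reducedHomology (K : Finset (Finset V)) (j : ℤ) : Type _ :=
  relHomology K ∅ j

/-- The subcomplex of `K` induced by the vertex set `U`. -/
def induced {V : Type*} [DecidableEq V] (K : Finset (Finset V)) (U : Finset V) :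
    Finset (Finset V) :=
  K.filter fun σ => σ ⊆ U

/-- `K` is `d`-Leray: every induced subcomplex has trivial reduced homology in
dimensions `d` and higher. -/
def IsLeray (d : ℕ) (K : Finset (Finset V)) : Prop :=
  ∀ (U : Finset V) (i : ℤ), (d : ℤ) ≤ i → Subsingleton (reducedHomology (induced K U) i)

/-- The complex is acyclic: all reduced homology groups vanish. -/
def IsAcyclic (K : Finset (Finset V)) : Prop :=
  ∀ i : ℤ, -1 ≤ i → Subsingleton (reducedHomology K i)

/-- The Leray number of `K`: the minimal `d` such that `K` is `d`-Leray. -/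
noncomputable def lerayNumber (K : Finset (Finset V)) : ℕ :=
  sInf {d : ℕ | IsLeray d K}

/-- The link of a face `τ` in `K`. -/
def link {V : Type*} [DecidableEq V] (K : Finset (Finset V)) (τ : Finset V) :
    Finset (Finset V) :=
  K.filter fun σ => σ ∩ τ = ∅ ∧ σ ∪ τ ∈ K

/-- The costar of a face `τ` in `K`: all faces not containing `τ`. -/
def costar {V : Type*} [DecidableEq V] (K : Finset (Finset V)) (τ : Finset V) :
    Finset (Finset V) :=
  K.filter fun σ => ¬ τ ⊆ σ

/-- `τ` is a maximal face of `K`. -/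
def IsMaximalFace {V : Type*} [DecidableEq V] (K : Finset (Finset V)) (τ : Finset V) : Prop :=
  τ ∈ K ∧ ∀ ρ ∈ K, τ ⊆ ρ → ρ = τ

/-- `σ` is a free face of `K`: it is contained in a unique maximal face of `K`. -/
def IsFreeFace {V : Type*} [DecidableEq V] (K : Finset (Finset V)) (σ : Finset V) : Prop :=
  σ ∈ K ∧ ∃! τ : Finset V, IsMaximalFace K τ ∧ σ ⊆ τ

/-- `K` is `d`-collapsible: it can be reduced to the void complex by repeatedly removing all
faces containing some free face of size at most `d` (an elementary `d`-collapse). -/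
inductive Collapsible {V : Type*} [DecidableEq V] (d : ℕ) : Finset (Finset V) → Prop
  | void : Collapsible d ∅
  | step (K : Finset (Finset V)) (σ : Finset V) : IsFreeFace K σ → σ.card ≤ d →
      Collapsible d (K.filter fun ρ => ¬ σ ⊆ ρ) → Collapsible d K

/-- The `t`-tolerance complex of `K`, with respect to the vertex set `A`:
all sets of the form `η ∪ τ` with `η ∈ K`, `τ ⊆ A` and `|τ| ≤ t`. -/
def tol {V : Type*} [DecidableEq V] (A : Finset V) (t : ℕ) (K : Finset (Finset V)) :
    Finset (Finset V) :=
  ((A.powerset.filter fun τ => τ.card ≤ t) ×ˢ K).image fun p => p.2 ∪ p.1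

/-- `τ` is a missing face of `K`: it is not a face, but all its proper subsets are faces. -/
def IsMissingFace {V : Type*} [DecidableEq V] (K : Finset (Finset V)) (τ : Finset V) : Prop :=
  τ ∉ K ∧ ∀ ρ ⊂ τ, ρ ∈ K

section Aux
set_option linter.unusedSectionVars false

variable {K : Finset (Finset V)} {t : ℕ} {σ : Finset V}

lemma mem_tol_iff {A : Finset V} {t : ℕ} {K : Finset (Finset V)} {ρ : Finset V} :
    ρ ∈ tol A t K ↔ ∃ η ∈ K, ∃ τ, τ ⊆ A ∧ τ.card ≤ t ∧ ρ = η ∪ τ := by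
  simp only [tol, mem_image, mem_product, mem_filter, mem_powerset, Prod.exists]
  constructor
  · rintro ⟨τ, η, ⟨⟨hτA, hτt⟩, hη⟩, rfl⟩; exact ⟨η, hη, τ, hτA, hτt, rfl⟩
  · rintro ⟨η, hη, τ, hτA, hτt, rfl⟩; exact ⟨τ, η, ⟨⟨hτA, hτt⟩, hη⟩, rfl⟩

/-- The union appearing in the second member of the target pair. -/
def Bset (K : Finset (Finset V)) (t : ℕ) (σ : Finset V) : Finset (Finset V) :=
  (σ.powerset.filter fun σ' => 1 ≤ σ'.card ∧ σ'.card ≤ t).biUnion fun σ' =>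
    tol (Finset.univ \ σ) (t - σ'.card) (link (induced K (Finset.univ \ σ')) (σ \ σ'))

lemma disj_of_mem_tolLink {ρ : Finset V} (h : ρ ∈ tol (Finset.univ \ σ) t (link K σ)) :
    ρ ∩ σ = ∅ := by
  obtain ⟨μ, hμ, τ, hτA, -, rfl⟩ := mem_tol_iff.1 h
  have hμσ : μ ∩ σ = ∅ := ((mem_filter.1 hμ).2).1
  have hτσ : τ ∩ σ = ∅ := by
    apply eq_empty_of_forall_notMem
    intro x hx
    have := hτA (mem_inter.1 hx).1
    simp only [mem_sdiff] at this
    exact this.2 (mem_inter.1 hx).2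
  rw [union_inter_distrib_right, hμσ, hτσ, union_empty]

lemma disj_of_mem_Bset {ρ : Finset V} (h : ρ ∈ Bset K t σ) : ρ ∩ σ = ∅ := by
  obtain ⟨σ', hσ', hρ⟩ := mem_biUnion.1 h
  obtain ⟨μ, hμ, τ, hτA, -, rfl⟩ := mem_tol_iff.1 hρ
  simp only [mem_filter, mem_powerset] at hσ'
  obtain ⟨hσ'σ, -, -⟩ := hσ'
  simp only [link, induced, mem_filter] at hμ
  obtain ⟨⟨-, hμsub⟩, hμd, -⟩ := hμ
  have hμσ : μ ∩ σ = ∅ := by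
    apply eq_empty_of_forall_notMem
    intro x hx
    obtain ⟨hxμ, hxσ⟩ := mem_inter.1 hx
    by_cases hx' : x ∈ σ'
    · have := hμsub hxμ; simp only [mem_sdiff] at this; exact this.2 hx'
    · exact (eq_empty_iff_forall_notMem.1 hμd x)
        (mem_inter.2 ⟨hxμ, mem_sdiff.2 ⟨hxσ, hx'⟩⟩)
  have hτσ : τ ∩ σ = ∅ := by
    apply eq_empty_of_forall_notMem
    intro x hx
    have := hτA (mem_inter.1 hx).1
    simp only [mem_sdiff] at this
    exact this.2 (mem_inter.1 hx).2
  rw [union_inter_distrib_right, hμσ, hτσ, union_empty]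

lemma mem_Y_of_not_subset {ρ : Finset V} (hρ : ρ ∈ tol Finset.univ t K)
    (hns : ¬ σ ⊆ ρ) : ρ ∈ tol Finset.univ t (costar K σ) := by
  obtain ⟨η, hη, τ, hτA, hτt, rfl⟩ := mem_tol_iff.1 hρ
  refine mem_tol_iff.2 ⟨η, ?_, τ, hτA, hτt, rfl⟩
  refine mem_filter.2 ⟨hη, fun hsub => hns fun x hx => ?_⟩
  exact subset_union_left (hsub hx)

lemma mem_Y_iff (hK : IsComplex K) {ρ : Finset V} (hσρ : σ ⊆ ρ) :
    ρ ∈ tol Finset.univ t (costar K σ) ↔ ρ \ σ ∈ Bset K t σ := by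
  constructor
  · intro h
    obtain ⟨η, hη, τ, -, hτt, hρeq⟩ := mem_tol_iff.1 h
    obtain ⟨hηK, hηns⟩ := mem_filter.1 hη
    set σ' : Finset V := σ \ η with hσ'def
    have hσ'ne : σ'.Nonempty := by
      rw [sdiff_nonempty]; exact hηns
    have hσ'τ : σ' ⊆ τ := by
      intro x hx
      obtain ⟨hxσ, hxη⟩ := mem_sdiff.1 hx
      have := hσρ hxσ
      rw [hρeq] at this
      rcases mem_union.1 this with h' | h'
      · exact absurd h' hxη
      · exact h'
    have hσ't : σ'.card ≤ t := le_trans (card_le_card hσ'τ) hτt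
    refine mem_biUnion.2 ⟨σ', ?_, ?_⟩
    · refine mem_filter.2 ⟨mem_powerset.2 sdiff_subset, ?_, hσ't⟩
      exact card_pos.2 hσ'ne
    · refine mem_tol_iff.2 ⟨η \ σ, ?_, τ \ σ, ?_, ?_, ?_⟩
      · -- η \ σ ∈ link (induced K (univ \ σ')) (σ \ σ')
        have hησ' : η ∩ σ' = ∅ := by
          apply eq_empty_of_forall_notMem
          intro x hx
          obtain ⟨h1, h2⟩ := mem_inter.1 hx
          exact (mem_sdiff.1 h2).2 h1
        have hηsub : η ⊆ Finset.univ \ σ' := fun x hx =>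
          mem_sdiff.2 ⟨mem_univ x, fun hx' => (mem_sdiff.1 hx').2 hx⟩
        have hσσ' : σ \ σ' = σ ∩ η := by
          ext x
          simp only [mem_sdiff, mem_inter, hσ'def, not_and, not_not]
          constructor
          · rintro ⟨h1, h2⟩; exact ⟨h1, h2 h1⟩
          · rintro ⟨h1, h2⟩; exact ⟨h1, fun _ => h2⟩
        refine mem_filter.2 ⟨?_, ?_, ?_⟩
        · refine mem_filter.2 ⟨hK _ hηK _ sdiff_subset, ?_⟩
          exact fun x hx => hηsub (mem_sdiff.1 hx).1
        · apply eq_empty_of_forall_notMem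
          intro x hx
          obtain ⟨h1, h2⟩ := mem_inter.1 hx
          exact (mem_sdiff.1 h1).2 (mem_sdiff.1 h2).1
        · have : η \ σ ∪ (σ \ σ') = η := by
            rw [hσσ']
            ext x
            simp only [mem_union, mem_sdiff, mem_inter]
            constructor
            · rintro (⟨h1, -⟩ | ⟨-, h2⟩) <;> assumption
            · intro hx
              by_cases hxσ : x ∈ σ
              · exact Or.inr ⟨hxσ, hx⟩
              · exact Or.inl ⟨hx, hxσ⟩
          rw [this]
          refine mem_filter.2 ⟨hηK, fun x hx =>
            mem_sdiff.2 ⟨mem_univ x, fun hx' => (mem_sdiff.1 hx').2 hx⟩⟩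
      · exact fun x hx => mem_sdiff.2 ⟨mem_univ x, (mem_sdiff.1 hx).2⟩
      · -- card bound : |τ \ σ| ≤ t - |σ'|
        have h1 : τ \ σ ⊆ τ \ σ' := fun x hx =>
          mem_sdiff.2 ⟨(mem_sdiff.1 hx).1, fun h => (mem_sdiff.1 hx).2 (sdiff_subset h)⟩
        calc (τ \ σ).card ≤ (τ \ σ').card := card_le_card h1
          _ = τ.card - σ'.card := card_sdiff_of_subset hσ'τ
          _ ≤ t - σ'.card := Nat.sub_le_sub_right hτt _
      · rw [hρeq, union_sdiff_distrib]
  · intro h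
    obtain ⟨σ', hσ', hρ⟩ := mem_biUnion.1 h
    simp only [mem_filter, mem_powerset] at hσ'
    obtain ⟨hσ'σ, hσ'1, hσ't⟩ := hσ'
    obtain ⟨μ, hμ, τ₀, hτ₀A, hτ₀t, heq⟩ := mem_tol_iff.1 hρ
    simp only [link, induced, mem_filter] at hμ
    obtain ⟨⟨hμK, hμsub⟩, hμd, hμu, hμusub⟩ := hμ
    refine mem_tol_iff.2 ⟨μ ∪ (σ \ σ'), ?_, τ₀ ∪ σ', ?_, ?_, ?_⟩
    · refine mem_filter.2 ⟨hμu, ?_⟩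
      intro hsub
      obtain ⟨x, hx⟩ := card_pos.1 hσ'1
      have hxσ : x ∈ σ := hσ'σ hx
      rcases mem_union.1 (hsub hxσ) with h' | h'
      · have := hμsub h'; exact (mem_sdiff.1 this).2 hx
      · exact (mem_sdiff.1 h').2 hx
    · exact fun x _ => mem_univ x
    · calc (τ₀ ∪ σ').card ≤ τ₀.card + σ'.card := card_union_le _ _
        _ ≤ (t - σ'.card) + σ'.card := Nat.add_le_add_right hτ₀t _
        _ = t := Nat.sub_add_cancel hσ't
    · -- ρ = (μ ∪ (σ \ σ')) ∪ (τ₀ ∪ σ')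
      have : ρ = (ρ \ σ) ∪ σ := by
        rw [sdiff_union_self_eq_union, union_eq_left.2 hσρ]
      rw [this, heq]
      have hσsplit : σ = (σ \ σ') ∪ σ' := by
        rw [sdiff_union_self_eq_union, union_eq_left.2 hσ'σ]
      conv_lhs => rw [hσsplit]
      ext x
      simp only [mem_union]
      tauto

lemma mem_X_iff (hK : IsComplex K) {ρ : Finset V} (hσρ : σ ⊆ ρ) :
    ρ ∈ tol Finset.univ t K ↔
      (ρ \ σ ∈ tol (Finset.univ \ σ) t (link K σ) ∨ ρ \ σ ∈ Bset K t σ) := by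
  constructor
  · intro h
    obtain ⟨η, hη, τ, hτA, hτt, hρeq⟩ := mem_tol_iff.1 h
    by_cases hse : σ ⊆ η
    · left
      refine mem_tol_iff.2 ⟨η \ σ, ?_, τ \ σ, ?_, ?_, ?_⟩
      · refine mem_filter.2 ⟨hK _ hη _ sdiff_subset, ?_, ?_⟩
        · apply eq_empty_of_forall_notMem
          intro x hx
          exact (mem_sdiff.1 (mem_inter.1 hx).1).2 (mem_inter.1 hx).2
        · rwa [sdiff_union_self_eq_union, union_eq_left.2 hse]
      · exact fun x hx => mem_sdiff.2 ⟨mem_univ x, (mem_sdiff.1 hx).2⟩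
      · exact le_trans (card_le_card sdiff_subset) hτt
      · rw [hρeq, union_sdiff_distrib]
    · right
      rw [← mem_Y_iff hK hσρ]
      exact mem_tol_iff.2 ⟨η, mem_filter.2 ⟨hη, hse⟩, τ, hτA, hτt, hρeq⟩
  · rintro (h | h)
    · obtain ⟨μ, hμ, τ₀, -, hτ₀t, heq⟩ := mem_tol_iff.1 h
      obtain ⟨hμK, hμd, hμu⟩ := mem_filter.1 hμ
      refine mem_tol_iff.2 ⟨μ ∪ σ, hμu, τ₀, fun x _ => mem_univ x, hτ₀t, ?_⟩
      have : ρ = (ρ \ σ) ∪ σ := by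
        rw [sdiff_union_self_eq_union, union_eq_left.2 hσρ]
      rw [this, heq]
      ext x; simp only [mem_union]; tauto
    · have := (mem_Y_iff hK hσρ).2 h
      obtain ⟨η, hη, τ, hτA, hτt, hρeq⟩ := mem_tol_iff.1 this
      exact mem_tol_iff.2 ⟨η, (mem_filter.1 hη).1, τ, hτA, hτt, hρeq⟩

lemma union_sdiff_cancel_aux {η σ : Finset V} (hdisj : η ∩ σ = ∅) : (η ∪ σ) \ σ = η := by
  ext x
  simp only [mem_sdiff, mem_union]
  constructor
  · rintro ⟨h1 | h1, h2⟩
    · exact h1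
    · exact absurd h1 h2
  · intro hx
    exact ⟨Or.inl hx, fun hs =>
      (eq_empty_iff_forall_notMem.1 hdisj x) (mem_inter.2 ⟨hx, hs⟩)⟩

lemma subset_of_relface {ρ : Finset V} (hX : ρ ∈ tol Finset.univ t K)
    (hY : ρ ∉ tol Finset.univ t (costar K σ)) : σ ⊆ ρ := by
  by_contra h
  exact hY (mem_Y_of_not_subset hX h)

/-- The sign used to make the face bijection a chain map. -/
noncomputable def eps (σ η : Finset V) : ℝ :=
  (-1) ^ (∑ u ∈ η, (σ.filter (· < u)).card)

lemma eps_mul_self (σ η : Finset V) : eps σ η * eps σ η = 1 := by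
  rw [eps, ← pow_add]
  exact Even.neg_one_pow ⟨_, rfl⟩

lemma eps_erase {v : V} {η : Finset V} (hv : v ∈ η) (σ : Finset V) :
    eps σ η = (-1) ^ ((σ.filter (· < v)).card) * eps σ (η.erase v) := by
  rw [eps, eps, ← pow_add, ← Finset.add_sum_erase _ _ hv]

lemma filter_card_split {σ ρ : Finset V} (h : σ ⊆ ρ) (v : V) :
    (ρ.filter (· < v)).card = ((ρ \ σ).filter (· < v)).card + (σ.filter (· < v)).card := by
  rw [← Finset.card_union_of_disjoint (Finset.disjoint_filter_filter sdiff_disjoint),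
    ← Finset.filter_union, Finset.sdiff_union_of_subset h]

lemma erase_sdiff_iff {σ π ρ : Finset V} (hπ : σ ⊆ π) (hρ : σ ⊆ ρ) {v : V} (hv : v ∈ ρ \ σ) :
    ρ.erase v = π ↔ (ρ \ σ).erase v = π \ σ := by
  obtain ⟨hvρ, hvσ⟩ := mem_sdiff.1 hv
  constructor
  · rintro rfl
    ext x
    simp only [mem_erase, mem_sdiff]
    tauto
  · intro h
    have h2 : (ρ.erase v) \ σ = π \ σ := by
      rw [← h]; ext x; simp only [mem_erase, mem_sdiff]; tauto
    have hσe : σ ⊆ ρ.erase v := fun x hx =>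
      mem_erase.2 ⟨fun he => hvσ (he ▸ hx), hρ hx⟩
    calc ρ.erase v = (ρ.erase v \ σ) ∪ σ := (sdiff_union_of_subset hσe).symm
      _ = (π \ σ) ∪ σ := by rw [h2]
      _ = π := sdiff_union_of_subset hπ

lemma key_sign {σ π ρ : Finset V} (hπ : σ ⊆ π) (hρ : σ ⊆ ρ) :
    eps σ (π \ σ) *
      (∑ v ∈ ρ, if ρ.erase v = π then (-1 : ℝ) ^ ((ρ.filter (· < v)).card) else 0) =
    eps σ (ρ \ σ) *
      (∑ v ∈ ρ \ σ, if (ρ \ σ).erase v = π \ σ then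
        (-1 : ℝ) ^ (((ρ \ σ).filter (· < v)).card) else 0) := by
  have hz : ∀ v ∈ ρ, v ∉ ρ \ σ →
      (if ρ.erase v = π then (-1 : ℝ) ^ ((ρ.filter (· < v)).card) else 0) = 0 := by
    intro v hvρ hv
    have hvσ : v ∈ σ := by
      by_contra h; exact hv (mem_sdiff.2 ⟨hvρ, h⟩)
    rw [if_neg]
    intro h
    have : v ∈ ρ.erase v := h ▸ hπ hvσ
    exact (mem_erase.1 this).1 rfl
  rw [← Finset.sum_subset sdiff_subset hz, Finset.mul_sum, Finset.mul_sum]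
  refine Finset.sum_congr rfl fun v hv => ?_
  by_cases h : (ρ \ σ).erase v = π \ σ
  · rw [if_pos ((erase_sdiff_iff hπ hρ hv).2 h), if_pos h,
      filter_card_split hρ v, eps_erase (show v ∈ ρ \ σ from hv) σ, h, pow_add]
    ring
  · rw [if_neg (fun h' => h ((erase_sdiff_iff hπ hρ hv).1 h')), if_neg h, mul_zero, mul_zero]

/-- The dimension-shifting bijection between the relative faces of the two pairs. -/
def faceEquiv (K : Finset (Finset V)) (t : ℕ) (σ : Finset V) (hK : IsComplex K)
    (i i' : ℤ) (hii : i = i' + σ.card) :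
    RelFace (tol Finset.univ t K) (tol Finset.univ t (costar K σ)) i ≃
      RelFace (tol (Finset.univ \ σ) t (link K σ))
        (tol (Finset.univ \ σ) t (link K σ) ∩ Bset K t σ) i' where
  toFun ρ := ⟨ρ.1 \ σ, by
    obtain ⟨hX, hY, hcard⟩ := ρ.2
    have hσρ : σ ⊆ ρ.1 := subset_of_relface hX hY
    have hX' : ρ.1 \ σ ∈ tol (Finset.univ \ σ) t (link K σ) := by
      rcases (mem_X_iff hK hσρ).1 hX with h | h
      · exact h
      · exact absurd ((mem_Y_iff hK hσρ).2 h) hY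
    refine ⟨hX', ?_, ?_⟩
    · intro hmem
      exact hY ((mem_Y_iff hK hσρ).2 (mem_inter.1 hmem).2)
    · have h1 : σ.card ≤ ρ.1.card := card_le_card hσρ
      have : ((ρ.1 \ σ).card : ℤ) = (ρ.1.card : ℤ) - σ.card := by
        rw [card_sdiff_of_subset hσρ]; push_cast [Nat.cast_sub h1]; ring
      omega⟩
  invFun η := ⟨η.1 ∪ σ, by
    obtain ⟨hX', hnY', hcard⟩ := η.2
    have hdisj : η.1 ∩ σ = ∅ := disj_of_mem_tolLink hX'
    have hd : Disjoint η.1 σ := disjoint_iff_inter_eq_empty.2 hdisj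
    have hσu : σ ⊆ η.1 ∪ σ := subset_union_right
    have hsd : (η.1 ∪ σ) \ σ = η.1 := union_sdiff_cancel_aux hdisj
    refine ⟨?_, ?_, ?_⟩
    · exact (mem_X_iff hK hσu).2 (Or.inl (by rw [hsd]; exact hX'))
    · intro hY
      have := (mem_Y_iff hK hσu).1 hY
      rw [hsd] at this
      exact hnY' (mem_inter.2 ⟨hX', this⟩)
    · rw [card_union_of_disjoint hd]
      push_cast
      omega⟩
  left_inv ρ := by
    apply Subtype.ext
    obtain ⟨hX, hY, -⟩ := ρ.2
    exact sdiff_union_of_subset (subset_of_relface hX hY)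
  right_inv η := by
    apply Subtype.ext
    have hdisj : η.1 ∩ σ = ∅ := disj_of_mem_tolLink η.2.1
    have hd : Disjoint η.1 σ := disjoint_iff_inter_eq_empty.2 hdisj
    exact union_sdiff_cancel_aux hdisj

/-- The sign-twisted chain isomorphism induced by `faceEquiv`. -/
noncomputable def chainEquiv (K : Finset (Finset V)) (t : ℕ) (σ : Finset V) (hK : IsComplex K)
    (i i' : ℤ) (hii : i = i' + σ.card) :
    (RelFace (tol Finset.univ t K) (tol Finset.univ t (costar K σ)) i → ℝ) ≃ₗ[ℝ]
      (RelFace (tol (Finset.univ \ σ) t (link K σ))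
        (tol (Finset.univ \ σ) t (link K σ) ∩ Bset K t σ) i' → ℝ) where
  toFun f η := eps σ η.1 * f ((faceEquiv K t σ hK i i' hii).symm η)
  map_add' f g := by funext η; simp [mul_add]
  map_smul' c f := by funext η; simp; ring
  invFun g ρ := eps σ ((faceEquiv K t σ hK i i' hii ρ).1) * g (faceEquiv K t σ hK i i' hii ρ)
  left_inv f := by
    funext ρ
    simp only [Equiv.symm_apply_apply]
    rw [← mul_assoc, eps_mul_self, one_mul]
  right_inv g := by
    funext η
    simp only [Equiv.apply_symm_apply]
    rw [← mul_assoc, eps_mul_self, one_mul]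

lemma chainEquiv_comm (K : Finset (Finset V)) (t : ℕ) (σ : Finset V) (hK : IsComplex K)
    (i j i' j' : ℤ) (hii : i = i' + σ.card) (hjj : j = j' + σ.card) (f : _) (ηπ : _) :
    (relBoundary (tol (Finset.univ \ σ) t (link K σ))
        (tol (Finset.univ \ σ) t (link K σ) ∩ Bset K t σ) i' j')
      ((chainEquiv K t σ hK i i' hii) f) ηπ =
    (chainEquiv K t σ hK j j' hjj) ((relBoundary (tol Finset.univ t K)
      (tol Finset.univ t (costar K σ)) i j) f) ηπ := by
  set eI := faceEquiv K t σ hK i i' hii with heI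
  set eJ := faceEquiv K t σ hK j j' hjj with heJ
  set π := eJ.symm ηπ with hπdef
  have hηπ : ηπ = eJ π := (eJ.apply_symm_apply ηπ).symm
  have hηπ1 : ηπ.1 = π.1 \ σ := by rw [hηπ]; rfl
  simp only [relBoundary, Matrix.mulVecLin, Matrix.mulVecBilin, Matrix.mulVecLin_apply, Matrix.mulVec, dotProduct, chainEquiv,
    LinearEquiv.coe_mk, LinearMap.coe_mk, AddHom.coe_mk]
  rw [← Equiv.sum_comp eI, Finset.mul_sum]
  refine Finset.sum_congr rfl fun ρ _ => ?_
  have hσρ : σ ⊆ ρ.1 := subset_of_relface ρ.2.1 ρ.2.2.1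
  have hσπ : σ ⊆ π.1 := subset_of_relface π.2.1 π.2.2.1
  have h1 : (eI ρ).1 = ρ.1 \ σ := rfl
  simp only [← heI, Equiv.symm_apply_apply, h1, hηπ1]
  have key := key_sign hσπ hσρ
  linear_combination f ρ * key.symm

lemma homology_transfer {M₁ M₂ M₃ N₁ N₂ N₃ : Type*}
    [AddCommGroup M₁] [Module ℝ M₁] [AddCommGroup M₂] [Module ℝ M₂]
    [AddCommGroup M₃] [Module ℝ M₃] [AddCommGroup N₁] [Module ℝ N₁]
    [AddCommGroup N₂] [Module ℝ N₂] [AddCommGroup N₃] [Module ℝ N₃]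
    (d₁ : M₁ →ₗ[ℝ] M₂) (d₂ : M₂ →ₗ[ℝ] M₃) (d₁' : N₁ →ₗ[ℝ] N₂) (d₂' : N₂ →ₗ[ℝ] N₃)
    (e₁ : M₁ ≃ₗ[ℝ] N₁) (e₂ : M₂ ≃ₗ[ℝ] N₂) (e₃ : M₃ ≃ₗ[ℝ] N₃)
    (h₁ : ∀ x, d₁' (e₁ x) = e₂ (d₁ x))
    (h₂ : ∀ x, d₂' (e₂ x) = e₃ (d₂ x)) :
    Nonempty ((LinearMap.ker d₂ ⧸
        Submodule.comap (LinearMap.ker d₂).subtype (LinearMap.range d₁)) ≃ₗ[ℝ]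
      (LinearMap.ker d₂' ⧸
        Submodule.comap (LinearMap.ker d₂').subtype (LinearMap.range d₁'))) := by
  have hker : (LinearMap.ker d₂).map (e₂ : M₂ →ₗ[ℝ] N₂) = LinearMap.ker d₂' := by
    ext x
    simp only [Submodule.mem_map, LinearMap.mem_ker, LinearEquiv.coe_coe]
    constructor
    · rintro ⟨y, hy, rfl⟩; rw [h₂ y, hy, map_zero]
    · intro hx
      refine ⟨e₂.symm x, ?_, e₂.apply_symm_apply x⟩
      have h3 := h₂ (e₂.symm x)
      rw [e₂.apply_symm_apply, hx] at h3
      exact e₃.injective (by rw [← h3, map_zero])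
  let eK : LinearMap.ker d₂ ≃ₗ[ℝ] LinearMap.ker d₂' :=
    (e₂.submoduleMap (LinearMap.ker d₂)).trans (LinearEquiv.ofEq _ _ hker)
  have heK : ∀ y : LinearMap.ker d₂, (eK y : N₂) = e₂ (y : M₂) := fun y => rfl
  refine ⟨Submodule.Quotient.equiv _ _ eK ?_⟩
  ext x
  simp only [Submodule.mem_map, Submodule.mem_comap, Submodule.subtype_apply,
    LinearMap.mem_range]
  constructor
  · rintro ⟨y, ⟨z, hz⟩, heq⟩
    have hval : e₂ (y : M₂) = (x : N₂) := by rw [← heK]; exact congrArg Subtype.val heq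
    exact ⟨e₁ z, by rw [h₁ z, hz, hval]⟩
  · rintro ⟨w, hw⟩
    have hx2 : (x : N₂) ∈ LinearMap.ker d₂' := x.2
    have hxk : e₂.symm (x : N₂) ∈ LinearMap.ker d₂ := by
      have h3 := h₂ (e₂.symm (x : N₂))
      rw [e₂.apply_symm_apply] at h3
      rw [LinearMap.mem_ker] at hx2 ⊢
      rw [hx2] at h3
      exact e₃.injective (by rw [← h3, map_zero])
    refine ⟨⟨e₂.symm (x : N₂), hxk⟩, ⟨e₁.symm w, ?_⟩, ?_⟩
    · apply e₂.injective
      rw [← h₁, e₁.apply_symm_apply, hw, e₂.apply_symm_apply]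
    · apply Subtype.ext
      refine (heK _).trans ?_
      exact e₂.apply_symm_apply _

end Aux

/-- For every `k`, the relative homology of the pair `(T_t(K), T_t(cost(K,σ)))` is isomorphic
to the relative homology, in dimension `k - |σ|`, of the pair consisting of `T_t(lk(K,σ))` and
its intersection with `⋃_{σ' ⊆ σ, 1 ≤ |σ'| ≤ t} T_{t-|σ'|}(lk(K[V∖σ'], σ∖σ'))`. -/
theorem relative_homology_tolerance_costar
    {V : Type*} [DecidableEq V] [LinearOrder V] [Fintype V]
    (K : Finset (Finset V)) (hK : IsComplex K) (t : ℕ) (σ : Finset V) (hσ : σ ∈ K) :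
    ∀ k : ℤ,
      Nonempty ((relHomology (tol Finset.univ t K) (tol Finset.univ t (costar K σ)) k) ≃ₗ[ℝ]
        (relHomology (tol (Finset.univ \ σ) t (link K σ))
          ((tol (Finset.univ \ σ) t (link K σ)) ∩
            ((σ.powerset.filter fun σ' => 1 ≤ σ'.card ∧ σ'.card ≤ t).biUnion fun σ' =>
              tol (Finset.univ \ σ) (t - σ'.card)
                (link (induced K (Finset.univ \ σ')) (σ \ σ'))))
          (k - σ.card))) := by
  intro k
  have h1 : (k + 1 : ℤ) = (k - σ.card + 1) + σ.card := by ring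
  have h2 : (k : ℤ) = (k - σ.card) + σ.card := by ring
  have h3 : (k - 1 : ℤ) = (k - σ.card - 1) + σ.card := by ring
  exact homology_transfer
    (relBoundary (tol Finset.univ t K) (tol Finset.univ t (costar K σ)) (k + 1) k)
    (relBoundary (tol Finset.univ t K) (tol Finset.univ t (costar K σ)) k (k - 1))
    (relBoundary (tol (Finset.univ \ σ) t (link K σ))
      (tol (Finset.univ \ σ) t (link K σ) ∩ Bset K t σ) (k - σ.card + 1) (k - σ.card))
    (relBoundary (tol (Finset.univ \ σ) t (link K σ))
      (tol (Finset.univ \ σ) t (link K σ) ∩ Bset K t σ) (k - σ.card) (k - σ.card - 1))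
    (chainEquiv K t σ hK (k + 1) (k - σ.card + 1) h1)
    (chainEquiv K t σ hK k (k - σ.card) h2)
    (chainEquiv K t σ hK (k - 1) (k - σ.card - 1) h3)
    (fun x => funext fun ηπ =>
      chainEquiv_comm K t σ hK (k + 1) k (k - σ.card + 1) (k - σ.card) h1 h2 x ηπ)
    (fun x => funext fun ηπ =>
      chainEquiv_comm K t σ hK k (k - 1) (k - σ.card) (k - σ.card - 1) h2 h3 x ηπ)
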